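/- Let T be the unit regular tetrahedron in ℝ³. The inverted scaled tetrahedron −(1/2)•T can hide behind T. -/

import Mathlib

open scoped Pointwise
open MeasureTheory

/-- Orthogonal projection of a point onto the hyperplane `u^⊥`. -/
noncomputable def proj {n : ℕ} (u x : EuclideanSpace ℝ (Fin n)) : EuclideanSpace ℝ (Fin n) :=
  (Submodule.orthogonalProjectionOnto (ℝ ∙ u)ᗮ x : EuclideanSpace ℝ (Fin n))

/-- `A` can hide behind `B`: for every unit direction `u` there is a translation vector in
`u^⊥` moving the shadow of `A` inside the shadow of `B`. -/
def HidesBehind {n : ℕ} (A B : Set (EuclideanSpace ℝ (Fin n))) : Prop :=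
  ∀ u : EuclideanSpace ℝ (Fin n), ‖u‖ = 1 →
    ∃ v ∈ (ℝ ∙ u)ᗮ, v +ᵥ (proj u '' A) ⊆ proj u '' B

/-- The unit regular tetrahedron in `ℝ³`. -/
noncomputable def T : Set (EuclideanSpace ℝ (Fin 3)) :=
  convexHull ℝ {!₂[0, 0, 0], !₂[1, 0, 0], !₂[1/2, Real.sqrt 3 / 2, 0],
    !₂[1/2, Real.sqrt 3 / 6, Real.sqrt (2/3)]}
/-!
After projecting onto `u^⊥`, the `n + 2` vertices of a simplex in `ℝ^(n+1)` lie in an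
`n`-dimensional space, so they are affinely dependent and Radon's theorem gives a point `p` in the
convex hulls of both parts `q '' I`, `q '' Iᶜ` of a partition of the vertices. With `S = ∑ i, q i`,
the translation `v = (S - p) / n` works: for each vertex `q k`, the part not containing `k` writes
`p` as a convex combination of vertices `q j` with `j ≠ k`, and `(S - q k - q j) / n` is the
centroid of the remaining `n` vertices. For the tetrahedron, `n = 2`.
-/

open Set

section ConvexHull

variable {ι E : Type*} [AddCommGroup E] [Module ℝ E]

theorem Convex.smul_sub_preimage {C : Set E} (hC : Convex ℝ C) (c : ℝ) (y : E) :
    Convex ℝ ((fun x => c • (y - x)) ⁻¹' C) := by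
  have hf : (fun x => c • (y - x)) = ⇑(AffineMap.const ℝ E (c • y) - c • AffineMap.id ℝ E) := by
    ext x; simp [smul_sub]
  rw [hf]
  exact hC.affine_preimage _

variable [Fintype ι] {q : ι → E} {n : ℕ}

theorem inv_smul_sum_sub_sub_mem_convexHull (hn : 0 < n) (hcard : Fintype.card ι = n + 2)
    {j k : ι} (hjk : j ≠ k) :
    (n : ℝ)⁻¹ • (∑ i, q i - q k - q j) ∈ convexHull ℝ (range q) := by
  classical
  set t := (Finset.univ.erase k).erase j
  have ht : t.card = n := by
    rw [Finset.card_erase_of_mem (by simp [hjk]), Finset.card_erase_of_mem (Finset.mem_univ _),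
      Finset.card_univ, hcard]
    rfl
  have hsum : ∑ i ∈ t, q i = ∑ i, q i - q k - q j := by
    rw [Finset.sum_erase_eq_sub (by simp [hjk]), Finset.sum_erase_eq_sub (Finset.mem_univ _)]
  have hmem := t.centerMass_mem_convexHull (w := fun _ => (1 : ℝ)) (z := q)
    (fun _ _ => zero_le_one) (by simp [ht, hn]) (fun i _ => mem_range_self i)
  simpa [Finset.centerMass, ht, hsum] using hmem

theorem inv_smul_sum_sub_sub_mem_convexHull_of_mem_convexHull_image (hn : 0 < n)
    (hcard : Fintype.card ι = n + 2) {J : Set ι} {k : ι} (hk : k ∉ J) {x : E}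
    (hx : x ∈ convexHull ℝ (q '' J)) :
    (n : ℝ)⁻¹ • (∑ i, q i - q k - x) ∈ convexHull ℝ (range q) := by
  refine convexHull_min ?_ ((convex_convexHull ℝ _).smul_sub_preimage _ _) hx
  rintro _ ⟨j, hj, rfl⟩
  exact inv_smul_sum_sub_sub_mem_convexHull hn hcard (ne_of_mem_of_not_mem hj hk)

theorem exists_vadd_neg_inv_smul_convexHull_subset (hn : 0 < n) (hcard : Fintype.card ι = n + 2)
    (hq : ¬AffineIndependent ℝ q) :
    ∃ v ∈ Submodule.span ℝ (range q),
      v +ᵥ (-(n : ℝ)⁻¹) • convexHull ℝ (range q) ⊆ convexHull ℝ (range q) := by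
  obtain ⟨I, p, hpI, hpIc⟩ := Convex.radon_partition hq
  have hp : p ∈ Submodule.span ℝ (range q) :=
    convexHull_min ((image_subset_range q I).trans Submodule.subset_span) (Submodule.convex _) hpI
  refine ⟨(n : ℝ)⁻¹ • (∑ i, q i - p),
    Submodule.smul_mem _ _ (Submodule.sub_mem _
      (Submodule.sum_mem _ fun i _ => Submodule.subset_span (mem_range_self i)) hp), ?_⟩
  have hvertex :
      range q ⊆ (fun x => (n : ℝ)⁻¹ • (∑ i, q i - p - x)) ⁻¹' convexHull ℝ (range q) := by
    rintro _ ⟨k, rfl⟩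
    simp only [mem_preimage, sub_right_comm _ p]
    by_cases hk : k ∈ I
    · exact inv_smul_sum_sub_sub_mem_convexHull_of_mem_convexHull_image hn hcard
        (not_not_intro hk) hpIc
    · exact inv_smul_sum_sub_sub_mem_convexHull_of_mem_convexHull_image hn hcard hk hpI
  rintro _ ⟨_, ⟨x, hx, rfl⟩, rfl⟩
  have hx' := convexHull_min hvertex ((convex_convexHull ℝ _).smul_sub_preimage _ _) hx
  simpa [vadd_eq_add, smul_sub, sub_eq_add_neg] using hx'

end ConvexHull

theorem not_affineIndependent_of_range_subset_submodule {ι k V : Type*} [Fintype ι] [Field k]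
    [AddCommGroup V] [Module k V] [FiniteDimensional k V] {K : Submodule k V} {q : ι → V}
    (hcard : Fintype.card ι = Module.finrank k K + 2) (hq : range q ⊆ K) :
    ¬AffineIndependent k q := by
  rw [← finrank_vectorSpan_le_iff_not_affineIndependent k q hcard]
  refine Submodule.finrank_mono (vectorSpan_def k (range q) ▸ Submodule.span_le.2 ?_)
  rintro _ ⟨_, ⟨i, rfl⟩, _, ⟨j, rfl⟩, rfl⟩
  exact K.sub_mem (hq (mem_range_self i)) (hq (mem_range_self j))

theorem hidesBehind_neg_inv_smul_convexHull {ι : Type*} [Fintype ι] {n : ℕ} (hn : 0 < n)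
    (hcard : Fintype.card ι = n + 2) (q : ι → EuclideanSpace ℝ (Fin (n + 1))) :
    HidesBehind ((-(n : ℝ)⁻¹) • convexHull ℝ (range q)) (convexHull ℝ (range q)) := by
  intro u hu
  set K := (ℝ ∙ u)ᗮ
  have : Fact (Module.finrank ℝ (EuclideanSpace ℝ (Fin (n + 1))) = n + 1) :=
    ⟨finrank_euclideanSpace_fin⟩
  have hK : Module.finrank ℝ K = n :=
    Submodule.finrank_orthogonal_span_singleton (ne_zero_of_norm_ne_zero (hu ▸ one_ne_zero))
  have hrange : range (K.starProjection ∘ q) ⊆ K :=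
    range_subset_iff.2 fun i => K.starProjection_apply_mem (q i)
  obtain ⟨v, hvK, hv⟩ := exists_vadd_neg_inv_smul_convexHull_subset hn hcard
    (not_affineIndependent_of_range_subset_submodule (by rw [hK, hcard]) hrange)
  refine ⟨v, Submodule.span_le.2 hrange hvK, ?_⟩
  have hproj : proj u = K.starProjection := rfl
  have himage : K.starProjection '' convexHull ℝ (range q) =
      convexHull ℝ (range (K.starProjection ∘ q)) := by
    rw [range_comp]
    exact K.starProjection.toLinearMap.image_convexHull _
  rwa [hproj, image_smul_set, himage]

theorem inverted_half_tetrahedron_hides_behind :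
    HidesBehind ((-(1/2) : ℝ) • T) T := by
  have hT : T = convexHull ℝ (range ![!₂[0, 0, 0], !₂[1, 0, 0], !₂[1/2, Real.sqrt 3 / 2, 0],
      !₂[1/2, Real.sqrt 3 / 6, Real.sqrt (2/3)]]) := by
    simp only [T, Matrix.range_cons, Matrix.range_empty, union_empty, singleton_union]
  rw [hT, show (-(1/2) : ℝ) = -((2 : ℕ) : ℝ)⁻¹ by norm_num]
  exact hidesBehind_neg_inv_smul_convexHull two_pos rfl _
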